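/- Let 𝒩 ⊂ M_n(F_q) be the set of nilpotent matrices and let f be its characteristic function. Then the Fourier transform f̂(Y) = Σ_{X nilpotent} φ(tr(XY)) depends only on the conjugacy class of Y, and f̂(0) = |𝒩| = q^{n² − n}. -/

import Mathlib

open Matrix

noncomputable section


open scoped Classical

/-!
Fine–Herstein by double counting pairs `(A, v)` with `A` nilpotent, `q ^ n * N n` of them.
Grouping them by the least `k` with `A ^ k v = 0`, the vectors `v, A v, …, A ^ (k - 1) v` form a
linearly independent Jordan chain of `A`. Conversely, a linearly independent `k`-tuple is a Jordan
chain of exactly `q ^ (k (n - k)) N (n - k)` nilpotent matrices: in a basis extending the tuple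
such a matrix is block upper triangular with the nilpotent Jordan block in the corner, an
arbitrary `k × (n - k)` block and a nilpotent `(n - k) × (n - k)` block. This gives
`q ^ n N n = ∑ₖ ∏_{i < k} (q ^ n - q ^ i) q ^ (k (n - k)) N (n - k)`, whose only solution with
`N 0 = 1` is `q ^ (n ^ 2 - n)`.
-/

section Arithmetic

open Finset

/-- For `q` a prime power this counts all pairs `(A, v)` by the dimension `k` of the cyclic
subspace generated by `v`. -/
theorem sum_prod_pow_sub_pow_mul_pow {R : Type*} [CommRing R] (q : R) (n : ℕ) :
    ∑ k ∈ range (n + 1), (∏ i ∈ range k, (q ^ n - q ^ i)) * q ^ (n * (n - k) + k) =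
      q ^ (n ^ 2 + n) := by
  induction n with
  | zero => simp
  | succ n ih =>
    have hterm (k : ℕ) (hk : k ∈ range (n + 1)) :
        (∏ i ∈ range (k + 1), (q ^ (n + 1) - q ^ i)) *
            q ^ ((n + 1) * (n + 1 - (k + 1)) + (k + 1)) =
          (q ^ (n + 1) - 1) * q ^ (n + 1) *
            ((∏ i ∈ range k, (q ^ n - q ^ i)) * q ^ (n * (n - k) + k)) := by
      have hk : k ≤ n := Nat.lt_succ_iff.mp (mem_range.mp hk)
      have hpow : q ^ k * q ^ ((n + 1) * (n + 1 - (k + 1)) + (k + 1)) =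
          q ^ (n + 1) * q ^ (n * (n - k) + k) := by
        rw [← pow_add, ← pow_add, Nat.add_sub_add_right]
        congr 1
        zify [hk]
        ring
      have hprod : ∏ i ∈ range k, (q ^ (n + 1) - q ^ (i + 1)) =
          q ^ k * ∏ i ∈ range k, (q ^ n - q ^ i) := by
        simp only [pow_succ', ← mul_sub, prod_mul_distrib, prod_const, card_range]
      rw [prod_range_succ', hprod, pow_zero]
      linear_combination (∏ i ∈ range k, (q ^ n - q ^ i)) * (q ^ (n + 1) - 1) * hpow
    rw [sum_range_succ', sum_congr rfl hterm, ← mul_sum, ih]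
    simp only [prod_range_zero, one_mul, Nat.sub_zero]
    ring_nf

theorem cast_prod_range_pow_sub_pow {R : Type*} [CommRing R] {q n k : ℕ} (hq : q ≠ 0)
    (hk : k ≤ n) :
    ((∏ i ∈ range k, (q ^ n - q ^ i) : ℕ) : R) = ∏ i ∈ range k, ((q : R) ^ n - (q : R) ^ i) := by
  rw [Nat.cast_prod]
  refine prod_congr rfl fun i hi => ?_
  rw [Nat.cast_sub (Nat.pow_le_pow_right (Nat.pos_of_ne_zero hq) ((mem_range.mp hi).le.trans hk)),
    Nat.cast_pow, Nat.cast_pow]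

theorem pow_mul_pow_sq_sub_eq_sum {q : ℕ} (hq : q ≠ 0) (n : ℕ) :
    q ^ n * q ^ (n ^ 2 - n) = ∑ k ∈ range (n + 1),
      (∏ i ∈ range k, (q ^ n - q ^ i)) * q ^ (k * (n - k)) * q ^ ((n - k) ^ 2 - (n - k)) := by
  have hexp (k : ℕ) (hk : k ≤ n) :
      n + (k * (n - k) + ((n - k) ^ 2 - (n - k))) = n * (n - k) + k := by
    obtain ⟨d, rfl⟩ := Nat.exists_eq_add_of_le hk
    rw [Nat.add_sub_cancel_left]
    zify [Nat.le_self_pow two_ne_zero d]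
    ring
  have hQ : (q : ℤ) ^ n ≠ 0 := pow_ne_zero _ (Nat.cast_ne_zero.mpr hq)
  apply Nat.cast_injective (R := ℤ)
  apply mul_left_cancel₀ hQ
  rw [Nat.cast_sum, mul_sum, ← Nat.cast_pow, ← Nat.cast_mul, ← pow_add, ← pow_add,
    show n + (n + (n ^ 2 - n)) = n ^ 2 + n by have := Nat.le_self_pow two_ne_zero n; omega,
    Nat.cast_pow, ← sum_prod_pow_sub_pow_mul_pow]
  refine sum_congr rfl fun k hk => ?_
  have hk : k ≤ n := Nat.lt_succ_iff.mp (mem_range.mp hk)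
  rw [Nat.cast_mul, Nat.cast_mul, cast_prod_range_pow_sub_pow hq hk, ← hexp k hk]
  push_cast
  ring

theorem eq_of_pow_mul_eq_sum {q : ℕ} (hq : 2 ≤ q) {c : ℕ → ℕ → ℕ} (hc : ∀ n, c n 0 = 1)
    {N M : ℕ → ℕ} (h0 : N 0 = M 0)
    (hN : ∀ n, q ^ n * N n = ∑ k ∈ range (n + 1), c n k * N (n - k))
    (hM : ∀ n, q ^ n * M n = ∑ k ∈ range (n + 1), c n k * M (n - k)) : N = M := by
  funext n
  induction n using Nat.strong_induction_on with
  | _ n ih =>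
  rcases n with _ | n
  · exact h0
  -- Both values solve `(q ^ (n + 1) - 1) x = S` with the same `S`, by induction.
  have hS : ∑ k ∈ range (n + 1), c (n + 1) (k + 1) * N (n + 1 - (k + 1)) =
      ∑ k ∈ range (n + 1), c (n + 1) (k + 1) * M (n + 1 - (k + 1)) :=
    sum_congr rfl fun k _ => by rw [ih _ (by omega)]
  have hN' := hN (n + 1)
  have hM' := hM (n + 1)
  rw [sum_range_succ', hc, one_mul, Nat.sub_zero] at hN' hM'
  have hpos : 0 < q ^ (n + 1) - 1 := Nat.sub_pos_of_lt (Nat.one_lt_pow n.succ_ne_zero hq)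
  refine Nat.eq_of_mul_eq_mul_left hpos ?_
  rw [Nat.sub_one_mul, Nat.sub_one_mul]
  omega

end Arithmetic

theorem isNilpotent_units_conj_iff {R : Type*} [MonoidWithZero R] (u : Rˣ) (x : R) :
    IsNilpotent (↑u * x * ↑u⁻¹) ↔ IsNilpotent x := by
  simp only [IsNilpotent, Units.conj_pow, Units.mul_right_eq_zero, Units.mul_left_eq_zero]

namespace Matrix

theorem sum_isNilpotent_trace_mul_conj {K ι M : Type*} [Field K] [Fintype K] [Fintype ι]
    [DecidableEq ι] [AddCommMonoid M] (f : K → M) (g : GL ι K) (Y : Matrix ι ι K) :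
    ∑ X : Matrix ι ι K,
        (if IsNilpotent X then f (trace (X * (g.val * Y * (↑g⁻¹ : Matrix ι ι K)))) else 0) =
      ∑ X : Matrix ι ι K, if IsNilpotent X then f (trace (X * Y)) else 0 := by
  let conj : Matrix ι ι K ≃ Matrix ι ι K :=
    ⟨fun X => g⁻¹.val * X * g.val, fun X => g.val * X * g⁻¹.val, fun X => by simp [mul_assoc],
      fun X => by simp [mul_assoc]⟩
  refine Fintype.sum_equiv conj _ _ fun X => ?_
  have hnil : IsNilpotent (g⁻¹.val * X * g) ↔ IsNilpotent X := by
    simpa using isNilpotent_units_conj_iff g⁻¹ X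
  have htr : trace (X * (g.val * Y * (↑g⁻¹ : Matrix ι ι K))) = trace (g⁻¹.val * X * g.val * Y) := by
    rw [← mul_assoc, ← mul_assoc, trace_mul_comm]
    simp only [mul_assoc]
  rw [htr, ← hnil]
  rfl

theorem isNilpotent_iff_charpoly {K ι : Type*} [Field K] [Fintype ι] [DecidableEq ι]
    (A : Matrix ι ι K) : IsNilpotent A ↔ A.charpoly = Polynomial.X ^ Fintype.card ι := by
  refine ⟨fun h => sub_eq_zero.mp (isNilpotent_charpoly_sub_pow_of_isNilpotent h).eq_zero,
    fun h => ⟨Fintype.card ι, ?_⟩⟩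
  simpa [h] using A.aeval_self_charpoly

theorem isNilpotent_fromBlocks_zero₂₁_iff {K m n : Type*} [Field K] [Fintype m] [Fintype n]
    [DecidableEq m] [DecidableEq n] {A : Matrix m m K} (hA : IsNilpotent A) (B : Matrix m n K)
    (D : Matrix n n K) : IsNilpotent (fromBlocks A B 0 D) ↔ IsNilpotent D := by
  rw [isNilpotent_iff_charpoly, isNilpotent_iff_charpoly D, charpoly_fromBlocks_zero₂₁,
    (isNilpotent_iff_charpoly A).mp hA, Fintype.card_sum, pow_add]
  exact mul_right_inj' (pow_ne_zero _ Polynomial.X_ne_zero)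

def fromBlocksNilpotentEquiv {K m n : Type*} [Field K] [Fintype m] [DecidableEq m] [Fintype n]
    [DecidableEq n] {A : Matrix m m K} (hA : IsNilpotent A) :
    {M : Matrix (m ⊕ n) (m ⊕ n) K // IsNilpotent M ∧ M.toBlocks₁₁ = A ∧ M.toBlocks₂₁ = 0} ≃
      Matrix m n K × {D : Matrix n n K // IsNilpotent D} where
  toFun M := (M.1.toBlocks₁₂, ⟨M.1.toBlocks₂₂, by
    obtain ⟨M, hM, h₁₁, h₂₁⟩ := M
    rw [← fromBlocks_toBlocks M, h₁₁, h₂₁] at hM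
    exact (isNilpotent_fromBlocks_zero₂₁_iff hA _ _).mp hM⟩)
  invFun BD := ⟨fromBlocks A BD.1 0 BD.2.1, (isNilpotent_fromBlocks_zero₂₁_iff hA _ _).mpr BD.2.2,
    toBlocks_fromBlocks₁₁ .., toBlocks_fromBlocks₂₁ ..⟩
  left_inv := by
    rintro ⟨M, hM, h₁₁, h₂₁⟩
    ext1
    simp only [← h₁₁, ← h₂₁, fromBlocks_toBlocks]
  right_inv BD := by simp

def nilpotentJordanBlock (K : Type*) [Zero K] [One K] (k : ℕ) : Matrix (Fin k) (Fin k) K :=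
  of fun i j => if (i : ℕ) = j + 1 then 1 else 0

theorem isNilpotent_nilpotentJordanBlock (K : Type*) [Field K] (k : ℕ) :
    IsNilpotent (nilpotentJordanBlock K k) := by
  have hupper : (nilpotentJordanBlock K k)ᵀ.IsUpperTriangular := fun i j hij => by
    simp only [transpose_apply, nilpotentJordanBlock, of_apply, ite_eq_right_iff]
    intro h
    rw [id, id, Fin.lt_def] at hij
    omega
  rw [← isNilpotent_transpose_iff, isNilpotent_iff_charpoly,
    charpoly_of_isUpperTriangular _ hupper]
  simp [nilpotentJordanBlock]

theorem sum_nilpotentJordanBlock_smul {K V : Type*} [Semiring K] [AddCommMonoid V] [Module K V]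
    {k : ℕ} (s : Fin k → V) (i : Fin k) :
    ∑ j, nilpotentJordanBlock K k j i • s j = if h : (i : ℕ) + 1 < k then s ⟨i + 1, h⟩ else 0 := by
  split_ifs with h
  · rw [Fintype.sum_eq_single ⟨i + 1, h⟩ fun j hj => ?_]
    · simp [nilpotentJordanBlock]
    · simp [nilpotentJordanBlock, Fin.ext_iff] at hj ⊢
      omega
  · exact Fintype.sum_eq_zero _ fun j => by simp [nilpotentJordanBlock]; omega

variable {K ι κ : Type*} [Field K] [Fintype ι] [DecidableEq ι] [Fintype κ] [DecidableEq κ]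

/-- By `sum_nilpotentJordanBlock_smul`, `A` maps `s i` to `s (i + 1)` and the last vector to `0`. -/
def IsJordanChain (A : Matrix ι ι K) {k : ℕ} (s : Fin k → ι → K) : Prop :=
  ∀ i, A *ᵥ s i = ∑ j, nilpotentJordanBlock K k j i • s j

theorem isJordanChain_pow_mulVec {A : Matrix ι ι K} {v : ι → K} {k : ℕ}
    (hk : A ^ k *ᵥ v = 0) : IsJordanChain A fun i : Fin k => A ^ (i : ℕ) *ᵥ v := by
  intro i
  rw [sum_nilpotentJordanBlock_smul, mulVec_mulVec, ← pow_succ']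
  split_ifs with h
  · rfl
  · rwa [show (i : ℕ) + 1 = k by omega]

theorem IsJordanChain.pow_mulVec_zero {A : Matrix ι ι K} {k : ℕ} {s : Fin (k + 1) → ι → K}
    (hs : IsJordanChain A s) (i : Fin (k + 1)) : A ^ (i : ℕ) *ᵥ s 0 = s i := by
  induction i using Fin.induction with
  | zero => simp
  | succ i ih =>
    rw [Fin.val_castSucc] at ih
    rw [Fin.val_succ, pow_succ', ← mulVec_mulVec, ih, hs, sum_nilpotentJordanBlock_smul,
      dif_pos (by simp)]
    rfl

theorem IsJordanChain.pow_mulVec_zero_eq_zero {A : Matrix ι ι K} {k : ℕ}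
    {s : Fin (k + 1) → ι → K} (hs : IsJordanChain A s) : A ^ (k + 1) *ᵥ s 0 = 0 := by
  have hlast := hs.pow_mulVec_zero (Fin.last k)
  rw [Fin.val_last] at hlast
  rw [pow_succ', ← mulVec_mulVec, hlast, hs, sum_nilpotentJordanBlock_smul, dif_neg (by simp)]

theorem linearIndependent_pow_mulVec {A : Matrix ι ι K} {v : ι → K} {k : ℕ}
    (hk : A ^ k *ᵥ v = 0) (hne : ∀ j < k, A ^ j *ᵥ v ≠ 0) :
    LinearIndependent K fun i : Fin k => A ^ (i : ℕ) *ᵥ v := by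
  induction k generalizing v with
  | zero => exact linearIndependent_empty_type
  | succ k ih =>
    have hcons : (fun i : Fin (k + 1) => A ^ (i : ℕ) *ᵥ v) =
        Fin.cons v fun i : Fin k => A ^ (i : ℕ) *ᵥ (A *ᵥ v) := by
      ext i : 1
      refine Fin.cases ?_ (fun i => ?_) i <;> simp [mulVec_mulVec, ← pow_succ]
    rw [hcons, linearIndependent_finCons]
    refine ⟨ih (by rwa [mulVec_mulVec, ← pow_succ]) fun j hj => ?_, fun hspan => ?_⟩
    · rw [mulVec_mulVec, ← pow_succ]
      exact hne _ (by omega)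
    -- `A ^ k` kills the span of `A v, …, A ^ k v` but not `v`.
    obtain ⟨c, hc⟩ := (Submodule.mem_span_range_iff_exists_fun K).mp hspan
    refine hne k k.lt_succ_self ?_
    rw [← hc, mulVec_sum]
    refine Finset.sum_eq_zero fun i _ => ?_
    rw [mulVec_smul, mulVec_mulVec, mulVec_mulVec, ← pow_add, ← pow_succ,
      show k + i + 1 = i + (k + 1) by omega, pow_add, ← mulVec_mulVec, hk, mulVec_zero, smul_zero]

theorem isJordanChain_iff_toBlocks {k : ℕ} (b : Module.Basis (Fin k ⊕ κ) K (ι → K))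
    (A : Matrix ι ι K) :
    IsJordanChain A (b ∘ Sum.inl) ↔
      (LinearMap.toMatrixAlgEquiv b (toLin' A)).toBlocks₁₁ = nilpotentJordanBlock K k ∧
        (LinearMap.toMatrixAlgEquiv b (toLin' A)).toBlocks₂₁ = 0 := by
  have hcol (i : Fin k) (x : Fin k ⊕ κ) :
      b.repr (∑ j, nilpotentJordanBlock K k j i • b (Sum.inl j)) x =
        Sum.elim (fun i' => nilpotentJordanBlock K k i' i) 0 x := by
    cases x <;> simp [Finsupp.single_apply]
  simp only [IsJordanChain, ← b.repr.injective.eq_iff, Finsupp.ext_iff, Function.comp_apply, hcol,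
    Sum.forall, Sum.elim_inl, Sum.elim_inr, forall_and, ← Matrix.ext_iff, toBlocks₁₁, toBlocks₂₁,
    of_apply, LinearMap.toMatrixAlgEquiv_apply, toLin'_apply, Pi.zero_apply, zero_apply]
  exact and_congr forall_comm forall_comm

variable (K ι) in
def nilpotentCount : ℕ := Nat.card {A : Matrix ι ι K // IsNilpotent A}

theorem nilpotentCount_congr (e : ι ≃ κ) : nilpotentCount K ι = nilpotentCount K κ :=
  Nat.card_congr <| (reindexAlgEquiv K K e).toEquiv.subtypeEquiv fun _ =>
    (IsNilpotent.map_iff (reindexAlgEquiv K K e).injective).symm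

section Counting

variable [Fintype K]

local notation "q" => Fintype.card K

theorem card_isNilpotent_isJordanChain_basis {k : ℕ} (b : Module.Basis (Fin k ⊕ κ) K (ι → K)) :
    Nat.card {A : Matrix ι ι K // IsNilpotent A ∧ IsJordanChain A (b ∘ Sum.inl)} =
      q ^ (k * Fintype.card κ) * nilpotentCount K κ := by
  let Φ := toLinAlgEquiv'.trans (LinearMap.toMatrixAlgEquiv b)
  let e : {A : Matrix ι ι K // IsNilpotent A ∧ IsJordanChain A (b ∘ Sum.inl)} ≃
      {M : Matrix (Fin k ⊕ κ) (Fin k ⊕ κ) K //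
        IsNilpotent M ∧ M.toBlocks₁₁ = nilpotentJordanBlock K k ∧ M.toBlocks₂₁ = 0} :=
    Φ.toEquiv.subtypeEquiv fun A =>
      and_congr (IsNilpotent.map_iff Φ.injective).symm (isJordanChain_iff_toBlocks b A)
  rw [Nat.card_congr (e.trans (fromBlocksNilpotentEquiv (isNilpotent_nilpotentJordanBlock K k))),
    Nat.card_prod, nilpotentCount]
  congr 1
  simp [Matrix, ← pow_mul, mul_comm]

theorem card_isNilpotent_isJordanChain {k : ℕ} {s : Fin k → ι → K}
    (hs : LinearIndependent K s) :
    Nat.card {A : Matrix ι ι K // IsNilpotent A ∧ IsJordanChain A s} =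
      q ^ (k * (Fintype.card ι - k)) * nilpotentCount K (Fin (Fintype.card ι - k)) := by
  let b := Module.Basis.sumExtend hs
  have hb : b ∘ Sum.inl = s := funext fun i => by simp [b, Module.Basis.sumExtend]; rfl
  have hcard : Fintype.card (Module.Basis.sumExtendIndex hs) = Fintype.card ι - k := by
    have := Module.finrank_eq_card_basis b
    simp only [Module.finrank_fintype_fun_eq_card, Fintype.card_sum, Fintype.card_fin] at this
    omega
  rw [← hb, card_isNilpotent_isJordanChain_basis b, hcard,
    nilpotentCount_congr (Fintype.equivFinOfCardEq hcard)]

theorem card_jordanChains {k : ℕ} (hk : k ≤ Fintype.card ι) :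
    Nat.card {c : (Fin k → ι → K) × Matrix ι ι K //
        LinearIndependent K c.1 ∧ IsNilpotent c.2 ∧ IsJordanChain c.2 c.1} =
      (∏ i ∈ Finset.range k, (q ^ Fintype.card ι - q ^ i)) * q ^ (k * (Fintype.card ι - k)) *
        nilpotentCount K (Fin (Fintype.card ι - k)) := by
  let e : {c : (Fin k → ι → K) × Matrix ι ι K //
        LinearIndependent K c.1 ∧ IsNilpotent c.2 ∧ IsJordanChain c.2 c.1} ≃
      Σ s : {s : Fin k → ι → K // LinearIndependent K s},
        {A : Matrix ι ι K // IsNilpotent A ∧ IsJordanChain A s.1} :=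
    { toFun c := ⟨⟨c.1.1, c.2.1⟩, c.1.2, c.2.2⟩
      invFun x := ⟨(x.1.1, x.2.1), x.1.2, x.2.2⟩
      left_inv _ := rfl
      right_inv _ := rfl }
  rw [Nat.card_congr e, Nat.card_sigma,
    Fintype.sum_congr _ _ fun s => card_isNilpotent_isJordanChain s.2, Finset.sum_const,
    Finset.card_univ, smul_eq_mul, ← Nat.card_eq_fintype_card,
    card_linearIndependent (by simpa using hk), Module.finrank_fintype_fun_eq_card,
    Fin.prod_univ_eq_prod_range (fun i => q ^ Fintype.card ι - q ^ i), mul_assoc]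

theorem card_nilpotent_pairs_of_order {k : ℕ} (hk : k ≤ Fintype.card ι) :
    Nat.card {p : Matrix ι ι K × (ι → K) //
        IsNilpotent p.1 ∧ p.1 ^ k *ᵥ p.2 = 0 ∧ ∀ j < k, p.1 ^ j *ᵥ p.2 ≠ 0} =
      (∏ i ∈ Finset.range k, (q ^ Fintype.card ι - q ^ i)) * q ^ (k * (Fintype.card ι - k)) *
        nilpotentCount K (Fin (Fintype.card ι - k)) := by
  cases k with
  | zero =>
    let e : {p : Matrix ι ι K × (ι → K) //
        IsNilpotent p.1 ∧ p.1 ^ 0 *ᵥ p.2 = 0 ∧ ∀ j < 0, p.1 ^ j *ᵥ p.2 ≠ 0} ≃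
        {A : Matrix ι ι K // IsNilpotent A} :=
      { toFun p := ⟨p.1.1, p.2.1⟩
        invFun A := ⟨(A.1, 0), A.2, by simp, by simp⟩
        left_inv := by
          rintro ⟨⟨A, v⟩, hA, hv, -⟩
          obtain rfl : v = 0 := by simpa using hv
          rfl
        right_inv _ := rfl }
    rw [Nat.card_congr e, ← nilpotentCount, nilpotentCount_congr (Fintype.equivFin ι)]
    simp
  | succ k =>
    let e : {p : Matrix ι ι K × (ι → K) //
        IsNilpotent p.1 ∧ p.1 ^ (k + 1) *ᵥ p.2 = 0 ∧ ∀ j < k + 1, p.1 ^ j *ᵥ p.2 ≠ 0} ≃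
        {c : (Fin (k + 1) → ι → K) × Matrix ι ι K //
          LinearIndependent K c.1 ∧ IsNilpotent c.2 ∧ IsJordanChain c.2 c.1} :=
      { toFun p := ⟨(fun i => p.1.1 ^ (i : ℕ) *ᵥ p.1.2, p.1.1),
          linearIndependent_pow_mulVec p.2.2.1 p.2.2.2, p.2.1, isJordanChain_pow_mulVec p.2.2.1⟩
        invFun c := ⟨(c.1.2, c.1.1 0), c.2.2.1, c.2.2.2.pow_mulVec_zero_eq_zero,
          fun j hj => c.2.2.2.pow_mulVec_zero ⟨j, hj⟩ ▸ c.2.1.ne_zero _⟩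
        left_inv p := by simp
        right_inv c := by
          ext1
          exact Prod.ext (funext c.2.2.2.pow_mulVec_zero) rfl }
    rw [Nat.card_congr e, card_jordanChains hk]

theorem pow_card_mul_nilpotentCount :
    q ^ Fintype.card ι * nilpotentCount K ι =
      ∑ k ∈ Finset.range (Fintype.card ι + 1),
        (∏ i ∈ Finset.range k, (q ^ Fintype.card ι - q ^ i)) * q ^ (k * (Fintype.card ι - k)) *
          nilpotentCount K (Fin (Fintype.card ι - k)) := by
  let T := {p : Matrix ι ι K × (ι → K) // IsNilpotent p.1}
  have hT : Nat.card T = q ^ Fintype.card ι * nilpotentCount K ι := by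
    rw [Nat.card_congr Equiv.prodSubtypeFstEquivSubtypeProd, Nat.card_prod, mul_comm]
    simp [nilpotentCount]
  have hex (p : T) : ∃ j, p.1.1 ^ j *ᵥ p.1.2 = 0 :=
    let ⟨j, hj⟩ := p.2
    ⟨j, by simp [hj]⟩
  let order (p : T) : Fin (Fintype.card ι + 1) :=
    ⟨Nat.find (hex p), Nat.lt_succ_of_le <| by
      simpa using (linearIndependent_pow_mulVec (Nat.find_spec (hex p))
        fun j hj => Nat.find_min (hex p) hj).fintype_card_le_finrank⟩
  have hfiber (k : Fin (Fintype.card ι + 1)) :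
      {p : T // order p = k} ≃ {p : Matrix ι ι K × (ι → K) //
        IsNilpotent p.1 ∧ p.1 ^ (k : ℕ) *ᵥ p.2 = 0 ∧ ∀ j < (k : ℕ), p.1 ^ j *ᵥ p.2 ≠ 0} :=
    { toFun p := ⟨p.1.1, p.1.2, (Nat.find_eq_iff _).mp (Fin.ext_iff.mp p.2)⟩
      invFun p := ⟨⟨p.1, p.2.1⟩, Fin.ext <| (Nat.find_eq_iff _).mpr p.2.2⟩
      left_inv _ := rfl
      right_inv _ := rfl }
  rw [← hT, Nat.card_congr (Equiv.sigmaFiberEquiv order).symm, Nat.card_sigma,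
    ← Fin.sum_univ_eq_sum_range]
  exact Fintype.sum_congr _ _ fun k =>
    (Nat.card_congr (hfiber k)).trans (card_nilpotent_pairs_of_order (Nat.le_of_lt_succ k.2))

variable (K ι) in
theorem nilpotentCount_eq : nilpotentCount K ι = q ^ (Fintype.card ι ^ 2 - Fintype.card ι) := by
  have h0 : nilpotentCount K (Fin 0) = 1 :=
    Nat.card_eq_one_iff_exists.mpr ⟨⟨0, IsNilpotent.zero⟩, fun _ => Subsingleton.elim _ _⟩
  rw [nilpotentCount_congr (Fintype.equivFin ι)]
  refine congrFun (eq_of_pow_mul_eq_sum (N := fun n => nilpotentCount K (Fin n))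
    (M := fun n => q ^ (n ^ 2 - n)) Fintype.one_lt_card (fun n => by simp) h0 (fun n => ?_)
    (pow_mul_pow_sq_sub_eq_sum Fintype.card_ne_zero)) _
  have := pow_card_mul_nilpotentCount (K := K) (ι := Fin n)
  rwa [Fintype.card_fin] at this

end Counting

end Matrix

theorem stmt12_general (n : ℕ) (F : Type) [Field F] [Fintype F]
    (φ : AddChar F ℂ) :
    (∀ (g : GL (Fin n) F) (Y : Matrix (Fin n) (Fin n) F),
        (∑ X : Matrix (Fin n) (Fin n) F,
            if IsNilpotent X then φ (Matrix.trace (X * (g.val * Y * (↑g⁻¹ : Matrix (Fin n) (Fin n) F)))) else 0)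
          = ∑ X : Matrix (Fin n) (Fin n) F,
              if IsNilpotent X then φ (Matrix.trace (X * Y)) else 0) ∧
    ((∑ X : Matrix (Fin n) (Fin n) F, if IsNilpotent X then φ (Matrix.trace (X * 0)) else 0)
        = (Fintype.card F : ℂ) ^ (n ^ 2 - n)) ∧
    (Nat.card {X : Matrix (Fin n) (Fin n) F // IsNilpotent X}
        = Fintype.card F ^ (n ^ 2 - n)) := by
  have hcard : Nat.card {X : Matrix (Fin n) (Fin n) F // IsNilpotent X} =
      Fintype.card F ^ (n ^ 2 - n) := by
    have := nilpotentCount_eq F (Fin n)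
    rw [Fintype.card_fin] at this
    exact this
  refine ⟨fun g Y => sum_isNilpotent_trace_mul_conj φ g Y, ?_, hcard⟩
  simp only [mul_zero, trace_zero, AddChar.map_zero_eq_one, Finset.sum_boole]
  rw [← Fintype.card_subtype, ← Nat.card_eq_fintype_card, hcard]
  push_cast
  rfl

/-- Let `𝒩 ⊂ M_n(F_q)` be the nilpotent cone and
`f̂(Y) = Σ_{X nilpotent} φ(tr(XY))` the Fourier transform of its characteristic function.
Then `f̂` depends only on the conjugacy class of `Y`, and `f̂(0) = |𝒩| = q^{n²−n}`
(Fine–Herstein). -/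
theorem stmt12 (n : ℕ) (F : Type) [Field F] [Fintype F] [DecidableEq F]
    (φ : AddChar F ℂ) (hφ : ∃ x : F, φ x ≠ 1) :
    (∀ (g : GL (Fin n) F) (Y : Matrix (Fin n) (Fin n) F),
        (∑ X : Matrix (Fin n) (Fin n) F,
            if IsNilpotent X then φ (Matrix.trace (X * (g.val * Y * (↑g⁻¹ : Matrix (Fin n) (Fin n) F)))) else 0)
          = ∑ X : Matrix (Fin n) (Fin n) F,
              if IsNilpotent X then φ (Matrix.trace (X * Y)) else 0) ∧
    ((∑ X : Matrix (Fin n) (Fin n) F, if IsNilpotent X then φ (Matrix.trace (X * 0)) else 0)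
        = (Fintype.card F : ℂ) ^ (n ^ 2 - n)) ∧
    (Nat.card {X : Matrix (Fin n) (Fin n) F // IsNilpotent X}
        = Fintype.card F ^ (n ^ 2 - n)) :=
  stmt12_general n F φ
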